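/- The commutator of the symmetric and skew-symmetric Obata operators is given explicitly by (⁺O∘⁺Φ − ⁺Φ∘⁺O)^{im}_{pj} = ¼ (g_{sj} g^{ir} a_{pr} ǎ^{sm} − a_{sj} ǎ^{ir} g_{pr} g^{sm}). -/

import Mathlib

open Matrix

/-!
Both operators have the form `½ (1 + T)`, where `T` is the contraction
`X^i_{jk} ↦ P_{sj} Q^{ih} X^s_{hk}` with `(P, Q) = (g, g⁻¹)` resp. `(a, ǎ)`. In the operator
algebra the commutator of `½ (1 + S)` and `½ (1 + T)` is `¼ [S, T]`, and the composite of two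
contractions has the product kernel of the composition rule, which gives the stated formula.
-/

/-- Symmetric Obata operator `(±O X)^i_{jk} = ½(X^i_{jk} ± g_{sj} g^{ih} X^s_{hk})`. -/
noncomputable def ObataO {n : ℕ} (ε : ℝ) (g : Matrix (Fin n) (Fin n) ℝ)
    (X : Fin n → Fin n → Fin n → ℝ) : Fin n → Fin n → Fin n → ℝ :=
  fun i j k => (1/2) * (X i j k + ε * ∑ s, ∑ h, g s j * g⁻¹ i h * X s h k)

/-- Skew Obata operator with `l = 0`: `(Φ^+ X)^i_{jk} = ½(X^i_{jk} + Σ_{s,r} a_{sj} ǎ^{ir} X^s_{rk})`. -/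
noncomputable def PhiPlus {n : ℕ} (a ac : Matrix (Fin n) (Fin n) ℝ)
    (X : Fin n → Fin n → Fin n → ℝ) : Fin n → Fin n → Fin n → ℝ :=
  fun i j k => (1/2) * (X i j k + ∑ s, ∑ r, a s j * ac i r * X s r k)

theorem sum_pair_comm {ι κ M : Type*} [Fintype ι] [Fintype κ] [AddCommMonoid M]
    (f : ι → ι → κ → κ → M) :
    ∑ a, ∑ b, ∑ c, ∑ d, f a b c d = ∑ c, ∑ d, ∑ a, ∑ b, f a b c d := by
  simpa only [Fintype.sum_prod_type] using Finset.sum_comm (s := Finset.univ) (t := Finset.univ)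
    (f := fun (x : ι × ι) (y : κ × κ) => f x.1 x.2 y.1 y.2)

section TensorContraction

variable {ι R : Type*} [Fintype ι] [CommSemiring R]

def tensorContraction (P Q : Matrix ι ι R) : Module.End R (ι → ι → ι → R) where
  toFun X i j k := ∑ s, ∑ h, P s j * Q i h * X s h k
  map_add' X Y := by
    ext i j k
    simp only [Pi.add_apply, mul_add, Finset.sum_add_distrib]
  map_smul' c X := by
    ext i j k
    simp only [Pi.smul_apply, smul_eq_mul, RingHom.id_apply, Finset.mul_sum]
    exact Finset.sum_congr rfl fun s _ => Finset.sum_congr rfl fun h _ => by ring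

theorem tensorContraction_apply (P Q : Matrix ι ι R) (X : ι → ι → ι → R) (i j k : ι) :
    tensorContraction P Q X i j k = ∑ s, ∑ h, P s j * Q i h * X s h k :=
  rfl

theorem tensorContraction_mul_apply (P Q P' Q' : Matrix ι ι R) (X : ι → ι → ι → R) :
    (tensorContraction P Q * tensorContraction P' Q') X =
      fun i j k => ∑ p, ∑ m, (∑ s, ∑ r, P s j * Q i r * P' p r * Q' s m) * X p m k := by
  ext i j k
  simp only [Module.End.mul_apply, tensorContraction_apply, Finset.mul_sum, Finset.sum_mul]
  rw [sum_pair_comm]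
  simp only [mul_assoc]

end TensorContraction

theorem smul_one_add_mul_sub_mul {K A : Type*} [CommSemiring K] [Ring A] [Algebra K A]
    (c : K) (x y : A) :
    c • (1 + x) * c • (1 + y) - c • (1 + y) * c • (1 + x) =
      (c * c) • (x * y - y * x) := by
  rw [smul_mul_smul_comm, smul_mul_smul_comm, ← smul_sub]
  congr 1
  noncomm_ring

theorem ObataO_eq {n : ℕ} (ε : ℝ) (g : Matrix (Fin n) (Fin n) ℝ)
    (X : Fin n → Fin n → Fin n → ℝ) :
    ObataO ε g X = ((1 / 2 : ℝ) • (1 + ε • tensorContraction g g⁻¹)) X := by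
  ext i j k
  simp [ObataO, tensorContraction_apply, mul_add]

theorem PhiPlus_eq {n : ℕ} (a ac : Matrix (Fin n) (Fin n) ℝ)
    (X : Fin n → Fin n → Fin n → ℝ) :
    PhiPlus a ac X = ((1 / 2 : ℝ) • (1 + tensorContraction a ac)) X := by
  ext i j k
  simp [PhiPlus, tensorContraction_apply, mul_add]

theorem obata_phi_commutator_general
    {n : ℕ} (g a ac : Matrix (Fin n) (Fin n) ℝ)
    (X : Fin n → Fin n → Fin n → ℝ) :
    ObataO 1 g (PhiPlus a ac X) - PhiPlus a ac (ObataO 1 g X) =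
      fun i j k => ∑ p, ∑ m,
        ((1/4) * ∑ s, ∑ r,
          (g s j * g⁻¹ i r * a p r * ac s m - a s j * ac i r * g p r * g⁻¹ s m)) * X p m k := by
  simp only [PhiPlus_eq, ObataO_eq, one_smul]
  rw [← Module.End.mul_apply, ← Module.End.mul_apply, ← LinearMap.sub_apply,
    smul_one_add_mul_sub_mul, LinearMap.smul_apply, LinearMap.sub_apply,
    tensorContraction_mul_apply, tensorContraction_mul_apply]
  ext i j k
  simp only [Pi.smul_apply, Pi.sub_apply, smul_eq_mul, Finset.sum_sub_distrib, mul_sub, sub_mul,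
    Finset.mul_sum, Finset.sum_mul]
  ring_nf

theorem obata_phi_commutator
    {n : ℕ} (g a ac : Matrix (Fin n) (Fin n) ℝ)
    (hg : g.IsSymm) (hginv : IsUnit g.det) (ha : aᵀ = -a)
    (X : Fin n → Fin n → Fin n → ℝ) :
    ObataO 1 g (PhiPlus a ac X) - PhiPlus a ac (ObataO 1 g X) =
      fun i j k => ∑ p, ∑ m,
        ((1/4) * ∑ s, ∑ r,
          (g s j * g⁻¹ i r * a p r * ac s m - a s j * ac i r * g p r * g⁻¹ s m)) * X p m k :=
  obata_phi_commutator_general g a ac X
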